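/- Let m ≥ 5, x ≥ 1 an integer, and let r be an integer with 0 < r < m-2, gcd(r, m-2) = 1 and 2r ≠ m-2. Then the set {y ∈ ℤ : 0 < P_m^{(r)}(y) ≤ (m-2)x²/2} has exactly 2x - 1 elements. -/

import Mathlib

/-!
Write `2 P(y) = y ((m - 2) y - b)` with `b = m - 2 - 2r`, so that `0 < |b| < m - 2`. Then
`2 P(y) > 0` exactly when `y ≠ 0`, and for `b > 0` the bound `2 P(y) ≤ (m - 2) x²` cuts out
exactly `1 - x ≤ y ≤ x`; the case `b < 0` is its mirror image under `y ↦ -y`. Either way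
`2x - 1` integers remain.
-/

/-- The generalized shifted `m`-gonal number of level `r` at `x`. -/
def shiftedPolygonal (m r x : ℤ) : ℤ := ((m - 2) * x ^ 2 - (m - 2 - 2 * r) * x) / 2

open Pointwise

theorem two_mul_shiftedPolygonal (m r y : ℤ) :
    2 * shiftedPolygonal m r y = y * ((m - 2) * y - (m - 2 - 2 * r)) := by
  obtain ⟨k, hk⟩ := Int.even_mul_succ_self (y - 1)
  rw [shiftedPolygonal, Int.mul_ediv_cancel']
  · ring
  · exact ⟨(m - 2) * k + r * y, by linear_combination (m - 2) * hk⟩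

theorem setOf_mul_sub_mem_Ioc_eq {a b x : ℤ} (hb : 0 < b) (hba : b < a) (hx : 1 ≤ x) :
    {y : ℤ | 0 < y * (a * y - b) ∧ y * (a * y - b) ≤ a * x ^ 2} =
      ↑((Finset.Icc (1 - x) x).erase 0) := by
  have ha : 0 < a := hb.trans hba
  ext y
  simp only [Set.mem_ofPred_eq, Finset.coe_erase, Finset.coe_Icc, Set.mem_sdiff, Set.mem_Icc,
    Set.mem_singleton_iff]
  constructor
  · rintro ⟨hpos, hle⟩
    refine ⟨⟨?_, ?_⟩, by rintro rfl; simp at hpos⟩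
    · by_contra! hy
      nlinarith [mul_nonneg ha.le (mul_nonneg (by omega : 0 ≤ -y - x) (by omega : 0 ≤ x - y)),
        mul_pos hb (by omega : 0 < -y)]
    · by_contra! hy
      nlinarith [mul_nonneg ha.le (mul_nonneg (by omega : 0 ≤ y - x - 1) (by omega : 0 ≤ y + x)),
        mul_pos (by omega : 0 < a - b) (by omega : 0 < y)]
  · rintro ⟨⟨hlo, hhi⟩, hy0⟩
    rcases lt_or_gt_of_ne hy0 with hy | hy
    · refine ⟨mul_pos_of_neg_of_neg hy (by nlinarith), ?_⟩
      nlinarith [mul_nonneg ha.le (mul_nonneg (by omega : 0 ≤ x - 1 + y) (by omega : 0 ≤ x - y)),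
        mul_nonneg (by omega : 0 ≤ a - b) (by omega : 0 ≤ -y)]
    · refine ⟨mul_pos hy (by nlinarith), ?_⟩
      nlinarith [mul_nonneg ha.le (mul_nonneg (by omega : 0 ≤ x - y) (by omega : 0 ≤ x + y)),
        mul_pos hb hy]

theorem ncard_setOf_mul_sub_mem_Ioc_of_pos {a b x : ℤ} (hb : 0 < b) (hba : b < a) (hx : 1 ≤ x) :
    ({y : ℤ | 0 < y * (a * y - b) ∧ y * (a * y - b) ≤ a * x ^ 2}.ncard : ℤ) = 2 * x - 1 := by
  rw [setOf_mul_sub_mem_Ioc_eq hb hba hx, Set.ncard_coe_finset,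
    Finset.card_erase_of_mem (by simp; omega), Int.card_Icc]
  omega

theorem ncard_setOf_mul_sub_mem_Ioc {a b x : ℤ} (hb0 : b ≠ 0) (hba : |b| < a) (hx : 1 ≤ x) :
    ({y : ℤ | 0 < y * (a * y - b) ∧ y * (a * y - b) ≤ a * x ^ 2}.ncard : ℤ) = 2 * x - 1 := by
  rcases lt_or_gt_of_ne hb0 with hb | hb
  · have hneg : {y : ℤ | 0 < y * (a * y - b) ∧ y * (a * y - b) ≤ a * x ^ 2} =
        -{y : ℤ | 0 < y * (a * y - -b) ∧ y * (a * y - -b) ≤ a * x ^ 2} := by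
      ext y
      simp only [Set.mem_neg, Set.mem_ofPred_eq]
      ring_nf
    rw [hneg, Set.ncard_neg]
    exact ncard_setOf_mul_sub_mem_Ioc_of_pos (by omega) (by rwa [abs_of_neg hb] at hba) hx
  · exact ncard_setOf_mul_sub_mem_Ioc_of_pos hb (by rwa [abs_of_pos hb] at hba) hx

theorem stmt_9_general (m r x : ℤ) (hx : 1 ≤ x) (hr0 : 0 < r) (hr1 : r < m - 2)
    (hne : 2 * r ≠ m - 2) :
    ({y : ℤ | 0 < shiftedPolygonal m r y ∧
        2 * shiftedPolygonal m r y ≤ (m - 2) * x ^ 2}.ncard : ℤ) = 2 * x - 1 := by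
  have hset : {y : ℤ | 0 < shiftedPolygonal m r y ∧
      2 * shiftedPolygonal m r y ≤ (m - 2) * x ^ 2} =
      {y : ℤ | 0 < y * ((m - 2) * y - (m - 2 - 2 * r)) ∧
        y * ((m - 2) * y - (m - 2 - 2 * r)) ≤ (m - 2) * x ^ 2} := by
    ext y
    simp only [Set.mem_ofPred_eq, ← two_mul_shiftedPolygonal]
    omega
  rw [hset]
  exact ncard_setOf_mul_sub_mem_Ioc (by omega) (abs_lt.mpr ⟨by omega, by omega⟩) hx

theorem stmt_9 (m r x : ℤ) (hm : 5 ≤ m) (hx : 1 ≤ x) (hr0 : 0 < r) (hr1 : r < m - 2)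
    (hgcd : Int.gcd r (m - 2) = 1) (hne : 2 * r ≠ m - 2) :
    ({y : ℤ | 0 < shiftedPolygonal m r y ∧
        2 * shiftedPolygonal m r y ≤ (m - 2) * x ^ 2}.ncard : ℤ) = 2 * x - 1 :=
  stmt_9_general m r x hx hr0 hr1 hne
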